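/- Let t ≥ 3 and n ≥ 2t + 17 be integers, and let H be a 3-uniform hypergraph on n vertices with minimum degree δ₁(H) ≥ g(n,t) that contains no linear path of length t + 1. Let P = (x₀, x₁, ..., x_{2t}) be a linear path of length t in H. If there is some k ∈ [0, t−1] such that d_P(0, 2k+1) > 0 and d_P(2t, 2k+1) > 0, then d_P(0, 2k+1) + d_P(2t, 2k+1) ≤ 2. -/

import Mathlib

/-- The degree of a vertex `v` in a hypergraph with edge set `E`:
the number of edges containing `v`. -/
def hdegree {V : Type*} [DecidableEq V] (E : Finset (Finset V)) (v : V) : ℕ :=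
  (E.filter (fun e => v ∈ e)).card

/-- The hypergraph with edge set `E` contains a linear path of length `k`:
a collection of `k` (distinct) edges `e₁, …, e_k` such that `|eᵢ ∩ e_j| = 1`
if `|i - j| = 1` and `eᵢ ∩ e_j = ∅` otherwise. -/
def HasLinearPath {V : Type*} [DecidableEq V] (E : Finset (Finset V)) (k : ℕ) : Prop :=
  ∃ f : Fin k → Finset V, Function.Injective f ∧ (∀ i, f i ∈ E) ∧
    ∀ i j : Fin k, i ≠ j →
      (((i : ℕ) + 1 = j ∨ (j : ℕ) + 1 = i) → (f i ∩ f j).card = 1) ∧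
      (¬((i : ℕ) + 1 = j ∨ (j : ℕ) + 1 = i) → f i ∩ f j = ∅)

/-- `x = (x₀, x₁, …, x_{2t})` is a linear path of length `t` in the hypergraph with
edge set `E`: the `2t+1` vertices are distinct and `{x_{2i}, x_{2i+1}, x_{2i+2}} ∈ E`
for each `i ∈ [0, t-1]`. -/
def IsLinearPathSeq {V : Type*} [DecidableEq V] (E : Finset (Finset V)) (t : ℕ)
    (x : Fin (2 * t + 1) → V) : Prop :=
  Function.Injective x ∧
  ∀ i : Fin t,
    ({x ⟨2 * i, by have := i.isLt; omega⟩,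
      x ⟨2 * i + 1, by have := i.isLt; omega⟩,
      x ⟨2 * i + 2, by have := i.isLt; omega⟩} : Finset V) ∈ E

/-- `dP E x a b` is the number of vertices `y` outside the path `x` such that
`{x_a, x_b, y}` is an edge; this is `d_P(a, b)` in the paper. -/
def dP {V : Type*} [Fintype V] [DecidableEq V] (E : Finset (Finset V)) {t : ℕ}
    (x : Fin (2 * t + 1) → V) (a b : Fin (2 * t + 1)) : ℕ :=
  (Finset.univ.filter
    (fun y => (∀ i, y ≠ x i) ∧ ({x a, x b, y} : Finset V) ∈ E)).card

/-- The function `g(n,t)` from the paper: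
`g(n,t) = ((t-1)/2)n + (3/2)t² - (9/2)t + 6` for odd `t`, and
`g(n,t) = ((t-2)/2)n + (3/2)t² - (5/2)t + 6` for even `t`. -/
def gQ (n t : ℕ) : ℚ :=
  if Odd t then ((t : ℚ) - 1) / 2 * n + 3 / 2 * t ^ 2 - 9 / 2 * t + 6
  else ((t : ℚ) - 2) / 2 * n + 3 / 2 * t ^ 2 - 5 / 2 * t + 6

/-!
If `y ≠ z` are vertices off `P` such that `{x₀, x_{2k+1}, y}` and `{x_{2t}, x_{2k+1}, z}`
are edges, then dropping the edge `{x_{2k}, x_{2k+1}, x_{2k+2}}` of `P` and walking along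
`x_{2k}, …, x₁, x₀, y, x_{2k+1}, z, x_{2t}, x_{2t-1}, …, x_{2k+2}` gives a linear path of
length `t + 1`. Two nonempty sets of total size at least `3` always contain such distinct
`y` and `z`.
-/

section

open Finset Fin.NatCast

theorem Finset.exists_ne_of_two_lt_card_add {α : Type*} {s t : Finset α} (hs : s.Nonempty)
    (ht : t.Nonempty) (h : 2 < #s + #t) : ∃ a ∈ s, ∃ b ∈ t, a ≠ b := by
  by_contra! hst
  obtain ⟨a, ha⟩ := hs
  obtain ⟨b, hb⟩ := ht
  have hs₁ : #s ≤ 1 := card_le_one.2 fun a₁ h₁ a₂ h₂ ↦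
    (hst a₁ h₁ b hb).trans (hst a₂ h₂ b hb).symm
  have ht₁ : #t ≤ 1 := card_le_one.2 fun b₁ h₁ b₂ h₂ ↦
    (hst a ha b₁ h₁).symm.trans (hst a ha b₂ h₂)
  omega

variable {V : Type*}

def detour (x : ℕ → V) (t k : ℕ) (y z : V) (m : ℕ) : V :=
  if m ≤ 2 * k then x (2 * k - m)
  else if m = 2 * k + 1 then y
  else if m = 2 * k + 2 then x (2 * k + 1)
  else if m = 2 * k + 3 then z
  else x (2 * t + 2 * k + 4 - m)

section

variable {x : ℕ → V} {t k : ℕ} {y z : V}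

lemma detour_injOn (hx : Set.InjOn x (Set.Iic (2 * t))) (hy : ∀ m ≤ 2 * t, y ≠ x m)
    (hz : ∀ m ≤ 2 * t, z ≠ x m) (hyz : y ≠ z) (hk : k < t) :
    Set.InjOn (detour x t k y z) (Set.Iic (2 * (t + 1))) := by
  intro a ha b hb hab
  simp only [Set.mem_Iic] at ha hb
  have hx' : ∀ {c d}, c ≤ 2 * t → d ≤ 2 * t → x c = x d → c = d :=
    fun hc hd h ↦ hx hc hd h
  unfold detour at hab
  split_ifs at hab <;> first
    | omega
    | exact absurd hab hyz
    | exact absurd hab hyz.symm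
    | exact absurd hab (hy _ (by omega))
    | exact absurd hab.symm (hy _ (by omega))
    | exact absurd hab (hz _ (by omega))
    | exact absurd hab.symm (hz _ (by omega))
    | (have := hx' (by omega) (by omega) hab; omega)

end

variable [DecidableEq V]

def pathEdge (w : ℕ → V) (i : ℕ) : Finset V := {w (2 * i), w (2 * i + 1), w (2 * i + 2)}

lemma pathEdge_eq_image (w : ℕ → V) (i : ℕ) :
    pathEdge w i = (Icc (2 * i) (2 * i + 2)).image w := by
  ext v
  simp only [pathEdge, mem_insert, mem_singleton, mem_image, mem_Icc]
  constructor
  · rintro (rfl | rfl | rfl) <;> exact ⟨_, by omega, rfl⟩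
  · rintro ⟨m, hm, rfl⟩
    obtain rfl | rfl | rfl : m = 2 * i ∨ m = 2 * i + 1 ∨ m = 2 * i + 2 := by omega
    all_goals simp

section

variable {w : ℕ → V} {t : ℕ}

lemma pathEdge_inter (hw : Set.InjOn w (Set.Iic (2 * t))) {i j : ℕ} (hi : i < t) (hj : j < t) :
    pathEdge w i ∩ pathEdge w j =
      (Icc (2 * i) (2 * i + 2) ∩ Icc (2 * j) (2 * j + 2)).image w := by
  rw [image_inter_of_injOn, pathEdge_eq_image, pathEdge_eq_image]
  refine hw.mono fun m hm ↦ ?_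
  simp only [coe_Icc, Set.mem_union, Set.mem_Icc, Set.mem_Iic] at hm ⊢
  omega

lemma pathEdge_inter_pathEdge_succ (hw : Set.InjOn w (Set.Iic (2 * t))) {i : ℕ}
    (hi : i + 1 < t) : pathEdge w i ∩ pathEdge w (i + 1) = {w (2 * i + 2)} := by
  rw [pathEdge_inter hw (by omega) hi, ← image_singleton]
  congr 1
  ext m
  simp only [mem_inter, mem_Icc, mem_singleton]
  omega

lemma pathEdge_inter_eq_empty (hw : Set.InjOn w (Set.Iic (2 * t))) {i j : ℕ} (hij : i + 2 ≤ j)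
    (hj : j < t) : pathEdge w i ∩ pathEdge w j = ∅ := by
  rw [pathEdge_inter hw (by omega) hj, image_eq_empty]
  ext m
  simp only [mem_inter, mem_Icc, notMem_empty, iff_false]
  omega

lemma pathEdge_injOn (hw : Set.InjOn w (Set.Iic (2 * t))) :
    Set.InjOn (pathEdge w) (Set.Iio t) := by
  intro i hi j hj hij
  have hmem : w (2 * i + 1) ∈ pathEdge w j := hij ▸ by simp [pathEdge]
  rw [pathEdge_eq_image] at hmem
  obtain ⟨m, hm, hmi⟩ := mem_image.1 hmem
  simp only [Set.mem_Iio, mem_Icc] at hi hj hm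
  have := hw (by simp; omega) (by simp; omega) hmi
  omega

theorem hasLinearPath_of_injOn (E : Finset (Finset V)) (hw : Set.InjOn w (Set.Iic (2 * t)))
    (hE : ∀ i < t, pathEdge w i ∈ E) : HasLinearPath E t := by
  refine ⟨fun i ↦ pathEdge w i, fun i j h ↦ Fin.ext (pathEdge_injOn hw i.2 j.2 h),
    fun i ↦ hE i i.2, fun i j hij ↦ ⟨?_, fun hnadj ↦ ?_⟩⟩
  · dsimp only
    rintro (h | h)
    · rw [← h, pathEdge_inter_pathEdge_succ hw (h ▸ j.2), card_singleton]
    · rw [inter_comm, ← h, pathEdge_inter_pathEdge_succ hw (h ▸ i.2), card_singleton]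
  · rcases Fin.lt_or_lt_of_ne hij with h | h
    · exact pathEdge_inter_eq_empty hw (by omega) j.2
    · dsimp only
      rw [inter_comm]
      exact pathEdge_inter_eq_empty hw (by omega) i.2

end

lemma pathEdge_eq_pathEdge_of_reverse {w x : ℕ → V} {i j : ℕ}
    (h₀ : w (2 * i) = x (2 * j + 2)) (h₁ : w (2 * i + 1) = x (2 * j + 1))
    (h₂ : w (2 * i + 2) = x (2 * j)) :
    pathEdge w i = pathEdge x j := by
  rw [pathEdge, pathEdge, h₀, h₁, h₂]
  ext
  simp only [mem_insert, mem_singleton]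
  tauto

lemma pathEdge_detour_mem {E : Finset (Finset V)} {x : ℕ → V} {t k : ℕ} {y z : V}
    (hE : ∀ i < t, pathEdge x i ∈ E)
    (hA : ({x 0, x (2 * k + 1), y} : Finset V) ∈ E)
    (hB : ({x (2 * t), x (2 * k + 1), z} : Finset V) ∈ E) (hk : k < t) {i : ℕ}
    (hi : i < t + 1) : pathEdge (detour x t k y z) i ∈ E := by
  rcases lt_trichotomy i k with h | rfl | h
  · rw [pathEdge_eq_pathEdge_of_reverse (j := k - 1 - i)]
    · exact hE _ (by omega)
    all_goals simp (disch := omega) only [detour, if_pos]; congr 1; omega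
  · convert hA using 1
    simp (disch := omega) only [pathEdge, detour, if_pos, if_neg, Nat.sub_self, ↓reduceIte]
    rw [pair_comm]
  · rcases (show i = k + 1 ∨ k + 2 ≤ i by omega) with rfl | h'
    · convert hB using 1
      simp (disch := omega) only [pathEdge, detour, if_pos, if_neg]
      rw [show 2 * t + 2 * k + 4 - (2 * (k + 1) + 2) = 2 * t by omega]
      ext
      simp only [mem_insert, mem_singleton]
      tauto
    · rw [pathEdge_eq_pathEdge_of_reverse (j := t + k + 1 - i)]
      · exact hE _ (by omega)
      all_goals simp (disch := omega) only [detour, if_neg]; congr 1; omega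

theorem hasLinearPath_detour (E : Finset (Finset V)) {x : ℕ → V} {t k : ℕ} {y z : V}
    (hx : Set.InjOn x (Set.Iic (2 * t))) (hE : ∀ i < t, pathEdge x i ∈ E)
    (hy : ∀ m ≤ 2 * t, y ≠ x m) (hz : ∀ m ≤ 2 * t, z ≠ x m) (hyz : y ≠ z)
    (hA : ({x 0, x (2 * k + 1), y} : Finset V) ∈ E)
    (hB : ({x (2 * t), x (2 * k + 1), z} : Finset V) ∈ E) (hk : k < t) :
    HasLinearPath E (t + 1) :=
  hasLinearPath_of_injOn E (detour_injOn hx hy hz hyz hk) fun _ hi ↦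
    pathEdge_detour_mem hE hA hB hk hi

namespace IsLinearPathSeq

variable {E : Finset (Finset V)} {t : ℕ} {x : Fin (2 * t + 1) → V}

lemma injOn_natCast (hx : IsLinearPathSeq E t x) :
    Set.InjOn (fun m : ℕ ↦ x m) (Set.Iic (2 * t)) := fun a ha b hb hab ↦ by
  simpa [Fin.val_cast_of_lt (Nat.lt_succ_of_le ha), Fin.val_cast_of_lt (Nat.lt_succ_of_le hb)]
    using congrArg Fin.val (hx.1 hab)

lemma pathEdge_natCast_mem (hx : IsLinearPathSeq E t x) {i : ℕ} (hi : i < t) :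
    pathEdge (fun m : ℕ ↦ x m) i ∈ E := by
  simpa only [pathEdge, Fin.natCast_eq_mk (show 2 * i < 2 * t + 1 by omega),
    Fin.natCast_eq_mk (show 2 * i + 1 < 2 * t + 1 by omega),
    Fin.natCast_eq_mk (show 2 * i + 2 < 2 * t + 1 by omega)] using hx.2 ⟨i, hi⟩

theorem hasLinearPath_succ (hx : IsLinearPathSeq E t x) {k : ℕ} (hk : k < t) {y z : V}
    (hy : ∀ i, y ≠ x i) (hz : ∀ i, z ≠ x i) (hyz : y ≠ z)
    (hA : ({x ⟨0, by omega⟩, x ⟨2 * k + 1, by omega⟩, y} : Finset V) ∈ E)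
    (hB : ({x ⟨2 * t, by omega⟩, x ⟨2 * k + 1, by omega⟩, z} : Finset V) ∈ E) :
    HasLinearPath E (t + 1) := by
  rw [← Fin.natCast_eq_mk, ← Fin.natCast_eq_mk] at hA hB
  exact hasLinearPath_detour E hx.injOn_natCast (fun _ ↦ hx.pathEdge_natCast_mem)
    (fun m _ ↦ hy m) (fun m _ ↦ hz m) hyz hA hB hk

end IsLinearPathSeq

end

theorem dP_odd_sum_le_two
    (t : ℕ) (ht : t ≥ 3)
    (V : Type*) [Fintype V] [DecidableEq V]
    (E : Finset (Finset V))
    (hfree : ¬ HasLinearPath E (t + 1))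
    (x : Fin (2 * t + 1) → V) (hx : IsLinearPathSeq E t x)
    (k : ℕ) (hk : k ≤ t - 1)
    (h0 : 0 < dP E x ⟨0, by omega⟩ ⟨2 * k + 1, by omega⟩)
    (h2t : 0 < dP E x ⟨2 * t, by omega⟩ ⟨2 * k + 1, by omega⟩) :
    dP E x ⟨0, by omega⟩ ⟨2 * k + 1, by omega⟩ +
      dP E x ⟨2 * t, by omega⟩ ⟨2 * k + 1, by omega⟩ ≤ 2 := by
  by_contra! hsum
  obtain ⟨y, hy, z, hz, hyz⟩ :=
    Finset.exists_ne_of_two_lt_card_add (Finset.card_pos.1 h0) (Finset.card_pos.1 h2t) hsum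
  rw [Finset.mem_filter] at hy hz
  exact hfree (hx.hasLinearPath_succ (by omega) hy.2.1 hz.2.1 hyz hy.2.2 hz.2.2)
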